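/- arXiv:1107.0233 — 2 statements merged into one kernel-verified Lean document; each statement's English description precedes it below -/
import Mathlib

section
/- Suppose q > μ and fix ε ∈ ℝ. There exists a continuously differentiable function g : (−∞, ε) → (0, k*) satisfying the ordinary differential equation g'(s) = 1 − Z(g(s))/(q·W(g(s))) for all s < ε, together with the boundary conditions lim_{s↑ε} g(s) = 0 and lim_{s→−∞} g(s) = k*. -/
open Real Filter Set MeasureTheory

noncomputable def dlt (σ μ q : ℝ) : ℝ := Real.sqrt ((μ / σ ^ 2 - 1 / 2) ^ 2 + 2 * q / σ ^ 2)

noncomputable def gma (σ μ : ℝ) : ℝ := 1 / 2 - μ / σ ^ 2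

noncomputable def gma1 (σ μ q : ℝ) : ℝ := gma σ μ - dlt σ μ q

noncomputable def gma2 (σ μ q : ℝ) : ℝ := gma σ μ + dlt σ μ q

/-- The scale function `W^{(q)}` of `X_t = (μ - σ²/2) t + σ B_t`. -/
noncomputable def W (σ μ q : ℝ) (x : ℝ) : ℝ :=
  if 0 ≤ x then 2 / (σ ^ 2 * dlt σ μ q) * Real.exp (gma σ μ * x) * Real.sinh (dlt σ μ q * x)
  else 0

/-- The scale function `Z^{(q)}` of `X_t = (μ - σ²/2) t + σ B_t`. -/
noncomputable def Z (σ μ q : ℝ) (x : ℝ) : ℝ :=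
  if 0 ≤ x then
    Real.exp (gma σ μ * x) * Real.cosh (dlt σ μ q * x)
      - gma σ μ / dlt σ μ q * Real.exp (gma σ μ * x) * Real.sinh (dlt σ μ q * x)
  else 1

/-- `k* = (γ₂ - γ₁)⁻¹ log((1 - 1/γ₁)/(1 - 1/γ₂))`. -/
noncomputable def kstar (σ μ q : ℝ) : ℝ :=
  (gma2 σ μ q - gma1 σ μ q)⁻¹ *
    Real.log ((1 - 1 / gma1 σ μ q) / (1 - 1 / gma2 σ μ q))

/-!
For `x ≥ 0` the scale functions are exponential sums,
`q W(x) = -γ₁γ₂ (e^{γ₂x} - e^{γ₁x}) / (γ₂ - γ₁)` and `Z(x) = (γ₂ e^{γ₁x} - γ₁ e^{γ₂x}) / (γ₂ - γ₁)`,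
so the right-hand side of the equation is `F = N / D` with
`N(x) = γ₁(γ₂ - 1) e^{γ₂x} - γ₂(γ₁ - 1) e^{γ₁x}` and `D(x) = γ₁γ₂ (e^{γ₂x} - e^{γ₁x})`.
As `γ₁ < 0` and `γ₂ > 1`, `D < 0` on `(0, ∞)` while `N > 0` exactly on `(-∞, k*)`, so `F < 0` on
`(0, k*)`. The autonomous equation `g' = F(g)` is solved by separation of variables:
`Ψ(x) = ε + ∫₀ˣ 1/F` has the closed form
`ε + (log N(x) - γ₁γ₂x - log(γ₂ - γ₁)) / ((1 - γ₁)(γ₂ - 1))`,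
it decreases strictly from `ε` at `0` to `-∞` at `k*`, and `g` is its inverse.
-/

open Function Topology

section InverseOfAntiderivative

variable {Ψ : ℝ → ℝ} {k ε : ℝ}

theorem bijOn_Ioo_Iio_of_strictAntiOn (hk : 0 < k) (hΨ : StrictAntiOn Ψ (Ico 0 k))
    (hΨc : ContinuousOn Ψ (Ico 0 k)) (hΨ0 : Ψ 0 = ε) (hΨk : Tendsto Ψ (𝓝[<] k) atBot) :
    BijOn Ψ (Ioo 0 k) (Iio ε) := by
  refine ⟨fun x hx => hΨ0 ▸ hΨ ⟨le_rfl, hk⟩ (Ioo_subset_Ico_self hx) hx.1,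
    hΨ.injOn.mono Ioo_subset_Ico_self, fun s hs => ?_⟩
  obtain ⟨x₁, hx₁s, hx₁⟩ : ∃ x₁, Ψ x₁ < s ∧ x₁ ∈ Ioo 0 k :=
    ((hΨk.eventually (eventually_lt_atBot s)).and (Ioo_mem_nhdsLT hk)).exists
  obtain ⟨x, hx, rfl⟩ := intermediate_value_Ioo' hx₁.1.le
    (hΨc.mono (Icc_subset_Ico_right hx₁.2)) ⟨hx₁s, hΨ0 ▸ hs⟩
  exact ⟨x, ⟨hx.1, hx.2.trans hx₁.2⟩, rfl⟩

theorem lt_invFunOn_iff (hbij : BijOn Ψ (Ioo 0 k) (Iio ε)) (hΨ : StrictAntiOn Ψ (Ioo 0 k))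
    {s x : ℝ} (hs : s < ε) (hx : x ∈ Ioo 0 k) : x < invFunOn Ψ (Ioo 0 k) s ↔ s < Ψ x := by
  rw [← hΨ.lt_iff_gt (hbij.surjOn.mapsTo_invFunOn hs) hx, hbij.surjOn.rightInvOn_invFunOn hs]

theorem invFunOn_lt_iff (hbij : BijOn Ψ (Ioo 0 k) (Iio ε)) (hΨ : StrictAntiOn Ψ (Ioo 0 k))
    {s x : ℝ} (hs : s < ε) (hx : x ∈ Ioo 0 k) : invFunOn Ψ (Ioo 0 k) s < x ↔ Ψ x < s := by
  rw [← hΨ.lt_iff_gt hx (hbij.surjOn.mapsTo_invFunOn hs), hbij.surjOn.rightInvOn_invFunOn hs]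

theorem tendsto_invFunOn (hbij : BijOn Ψ (Ioo 0 k) (Iio ε)) (hΨ : StrictAntiOn Ψ (Ioo 0 k))
    {l : Filter ℝ} {y : ℝ} (hy : y ∈ Icc 0 k) (hl : ∀ᶠ s in l, s < ε)
    (hlow : ∀ x ∈ Ioo 0 k, x < y → ∀ᶠ s in l, s < Ψ x)
    (hup : ∀ x ∈ Ioo 0 k, y < x → ∀ᶠ s in l, Ψ x < s) :
    Tendsto (invFunOn Ψ (Ioo 0 k)) l (𝓝 y) := by
  refine tendsto_order.2 ⟨fun c hc => ?_, fun c hc => ?_⟩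
  · rcases lt_or_ge c 0 with hc0 | hc0
    · filter_upwards [hl] with s hs using hc0.trans (hbij.surjOn.mapsTo_invFunOn hs).1
    obtain ⟨x, hcx, hxy⟩ := exists_between hc
    have hx : x ∈ Ioo 0 k := ⟨hc0.trans_lt hcx, hxy.trans_le hy.2⟩
    filter_upwards [hl, hlow x hx hxy] with s hs hsx
    exact hcx.trans ((lt_invFunOn_iff hbij hΨ hs hx).2 hsx)
  · rcases le_or_gt k c with hck | hck
    · filter_upwards [hl] with s hs using (hbij.surjOn.mapsTo_invFunOn hs).2.trans_le hck
    obtain ⟨x, hyx, hxc⟩ := exists_between hc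
    have hx : x ∈ Ioo 0 k := ⟨hy.1.trans_lt hyx, hxc.trans hck⟩
    filter_upwards [hl, hup x hx hyx] with s hs hsx
    exact ((invFunOn_lt_iff hbij hΨ hs hx).2 hsx).trans hxc

theorem continuousAt_invFunOn (hbij : BijOn Ψ (Ioo 0 k) (Iio ε)) (hΨ : StrictAntiOn Ψ (Ioo 0 k))
    {s : ℝ} (hs : s < ε) : ContinuousAt (invFunOn Ψ (Ioo 0 k)) s := by
  have hgs := hbij.surjOn.mapsTo_invFunOn hs
  refine tendsto_invFunOn hbij hΨ (Ioo_subset_Icc_self hgs) (Iio_mem_nhds hs)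
    (fun x hx hxy => Iio_mem_nhds ?_) (fun x hx hxy => Ioi_mem_nhds ?_)
  · exact (lt_invFunOn_iff hbij hΨ hs hx).1 hxy
  · exact (invFunOn_lt_iff hbij hΨ hs hx).1 hxy

theorem tendsto_invFunOn_nhdsLT (hbij : BijOn Ψ (Ioo 0 k) (Iio ε)) (hΨ : StrictAntiOn Ψ (Ioo 0 k))
    (hk : 0 < k) : Tendsto (invFunOn Ψ (Ioo 0 k)) (𝓝[<] ε) (𝓝 0) :=
  tendsto_invFunOn hbij hΨ ⟨le_rfl, hk.le⟩ self_mem_nhdsWithin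
    (fun _ hx hx0 => absurd hx.1 hx0.not_gt)
    (fun _ hx _ => nhdsWithin_le_nhds (Ioi_mem_nhds (hbij.mapsTo hx)))

theorem tendsto_invFunOn_atBot (hbij : BijOn Ψ (Ioo 0 k) (Iio ε)) (hΨ : StrictAntiOn Ψ (Ioo 0 k))
    (hk : 0 < k) : Tendsto (invFunOn Ψ (Ioo 0 k)) atBot (𝓝 k) :=
  tendsto_invFunOn hbij hΨ ⟨hk.le, le_rfl⟩ (eventually_lt_atBot ε)
    (fun x _ _ => eventually_lt_atBot (Ψ x)) (fun _ hx hkx => absurd hx.2 hkx.not_gt)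

theorem exists_hasDerivAt_of_inverse_antideriv {F Ψ : ℝ → ℝ} {k ε : ℝ} (hk : 0 < k)
    (hΨc : ContinuousOn Ψ (Ico 0 k)) (hΨ' : ∀ x ∈ Ioo 0 k, HasDerivAt Ψ (F x)⁻¹ x)
    (hF : ∀ x ∈ Ioo 0 k, F x < 0) (hFc : ContinuousOn F (Ioo 0 k))
    (hΨ0 : Ψ 0 = ε) (hΨk : Tendsto Ψ (𝓝[<] k) atBot) :
    ∃ g : ℝ → ℝ, (∀ s ∈ Iio ε, g s ∈ Ioo 0 k) ∧ ContDiffOn ℝ 1 g (Iio ε) ∧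
      (∀ s ∈ Iio ε, HasDerivAt g (F (g s)) s) ∧
      Tendsto g (𝓝[<] ε) (𝓝 0) ∧ Tendsto g atBot (𝓝 k) := by
  have hanti : StrictAntiOn Ψ (Ico 0 k) :=
    strictAntiOn_of_deriv_neg (convex_Ico 0 k) hΨc fun x hx => by
      rw [interior_Ico] at hx
      rw [(hΨ' x hx).deriv]
      exact inv_lt_zero.2 (hF x hx)
  have hbij := bijOn_Ioo_Iio_of_strictAntiOn hk hanti hΨc hΨ0 hΨk
  replace hanti := hanti.mono Ioo_subset_Ico_self
  set g := invFunOn Ψ (Ioo 0 k)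
  have hg : MapsTo g (Iio ε) (Ioo 0 k) := hbij.surjOn.mapsTo_invFunOn
  have hgc : ContinuousOn g (Iio ε) := fun s hs =>
    (continuousAt_invFunOn hbij hanti hs).continuousWithinAt
  have hg' : ∀ s ∈ Iio ε, HasDerivAt g (F (g s)) s := fun s hs => by
    simpa using (hΨ' _ (hg hs)).of_local_left_inverse (hgc.continuousAt (Iio_mem_nhds hs))
      (inv_ne_zero (hF _ (hg hs)).ne)
      (eventually_of_mem (Iio_mem_nhds hs) hbij.surjOn.rightInvOn_invFunOn)
  refine ⟨g, hg, ?_, hg', tendsto_invFunOn_nhdsLT hbij hanti hk,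
    tendsto_invFunOn_atBot hbij hanti hk⟩
  refine (contDiffOn_one_iff_derivWithin isOpen_Iio.uniqueDiffOn).2
    ⟨fun s hs => (hg' s hs).differentiableAt.differentiableWithinAt, ?_⟩
  refine (hFc.comp hgc hg).congr fun s hs => ?_
  rw [derivWithin_of_isOpen isOpen_Iio hs, (hg' s hs).deriv, comp_apply]

end InverseOfAntiderivative

namespace BoundaryODE

noncomputable def num (a b x : ℝ) : ℝ := a * (b - 1) * exp (b * x) - b * (a - 1) * exp (a * x)

noncomputable def den (a b x : ℝ) : ℝ := a * b * (exp (b * x) - exp (a * x))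

noncomputable def root (a b : ℝ) : ℝ := (b - a)⁻¹ * log ((1 - 1 / a) / (1 - 1 / b))

noncomputable def antideriv (a b x : ℝ) : ℝ :=
  (log (num a b x) - a * b * x - log (b - a)) / ((1 - a) * (b - 1))

variable {a b : ℝ}

theorem continuous_num : Continuous (num a b) := by
  unfold num
  fun_prop

theorem continuous_den : Continuous (den a b) := by
  unfold den
  fun_prop

theorem num_zero : num a b 0 = b - a := by
  simp only [num, mul_zero, exp_zero, mul_one]
  ring

theorem one_lt_ratio (ha : a < 0) (hb : 1 < b) : 1 < (1 - 1 / a) / (1 - 1 / b) := by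
  have h1 : 1 / a < 0 := one_div_neg.2 ha
  have h2 : 0 < 1 / b := one_div_pos.2 (by linarith)
  have h3 : 1 / b < 1 := (div_lt_one (by linarith)).2 hb
  exact (one_lt_div (by linarith)).2 (by linarith)

theorem num_eq (ha : a < 0) (hb : 1 < b) (x : ℝ) :
    num a b x = -a * (b - 1) * exp (a * x) *
      ((1 - 1 / a) / (1 - 1 / b) - exp ((b - a) * x)) := by
  have ha' : a ≠ 0 := ha.ne
  have hb' : b - 1 ≠ 0 := by linarith
  rw [num, sub_mul, exp_sub]
  field_simp
  ring

theorem num_pos_iff (ha : a < 0) (hb : 1 < b) {x : ℝ} : 0 < num a b x ↔ x < root a b := by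
  have hc : 0 < -a * (b - 1) * exp (a * x) :=
    mul_pos (mul_pos (neg_pos.2 ha) (by linarith)) (exp_pos _)
  rw [num_eq ha hb, mul_pos_iff_of_pos_left hc, sub_pos, root,
    lt_inv_mul_iff₀ (by linarith), lt_log_iff_exp_lt (by linarith [one_lt_ratio ha hb])]

theorem num_root (ha : a < 0) (hb : 1 < b) : num a b (root a b) = 0 := by
  rw [num_eq ha hb, root, mul_inv_cancel_left₀ (by linarith),
    exp_log (by linarith [one_lt_ratio ha hb]), sub_self, mul_zero]

theorem root_pos (ha : a < 0) (hb : 1 < b) : 0 < root a b :=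
  (num_pos_iff ha hb).1 (by rw [num_zero]; linarith)

theorem den_neg (ha : a < 0) (hb : 1 < b) {x : ℝ} (hx : 0 < x) : den a b x < 0 :=
  mul_neg_of_neg_of_pos (mul_neg_of_neg_of_pos ha (by linarith))
    (sub_pos.2 (exp_lt_exp.2 (by nlinarith)))

theorem num_div_den_neg (ha : a < 0) (hb : 1 < b) {x : ℝ} (hx : x ∈ Ioo 0 (root a b)) :
    num a b x / den a b x < 0 :=
  div_neg_of_pos_of_neg ((num_pos_iff ha hb).2 hx.2) (den_neg ha hb hx.1)

theorem continuousOn_num_div_den (ha : a < 0) (hb : 1 < b) :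
    ContinuousOn (fun x => num a b x / den a b x) (Ioi 0) :=
  continuous_num.continuousOn.div continuous_den.continuousOn fun _ hx => (den_neg ha hb hx).ne

theorem hasDerivAt_antideriv (ha : a < 0) (hb : 1 < b) {x : ℝ} (hx : 0 < num a b x) :
    HasDerivAt (antideriv a b) (den a b x / num a b x) x := by
  have hnum : HasDerivAt (num a b)
      (a * (b - 1) * (exp (b * x) * b) - b * (a - 1) * (exp (a * x) * a)) x := by
    have hexp (c : ℝ) : HasDerivAt (fun y => exp (c * y)) (exp (c * x) * c) x := by
      simpa using ((hasDerivAt_id x).const_mul c).exp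
    exact ((hexp b).const_mul _).sub ((hexp a).const_mul _)
  refine ((((hnum.log hx.ne').sub ((hasDerivAt_id' x).const_mul (a * b))).sub_const
    (log (b - a))).div_const ((1 - a) * (b - 1))).congr_deriv ?_
  have h1 : 1 - a ≠ 0 := by linarith
  have h2 : b - 1 ≠ 0 := by linarith
  field_simp
  rw [num, den]
  ring

theorem antideriv_zero : antideriv a b 0 = 0 := by
  simp [antideriv, num_zero]

theorem tendsto_antideriv_root (ha : a < 0) (hb : 1 < b) :
    Tendsto (antideriv a b) (𝓝[<] root a b) atBot := by
  have hnum : Tendsto (num a b) (𝓝[<] root a b) (𝓝[>] 0) :=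
    tendsto_nhdsWithin_of_tendsto_nhds_of_eventually_within _
      (num_root ha hb ▸ continuous_num.continuousAt.mono_left nhdsWithin_le_nhds)
      (eventually_nhdsWithin_of_forall fun x hx => (num_pos_iff ha hb).2 hx)
  have hlin : Tendsto (fun x => -(a * b * x) - log (b - a)) (𝓝[<] root a b)
      (𝓝 (-(a * b * root a b) - log (b - a))) :=
    (Continuous.tendsto (by fun_prop) _).mono_left nhdsWithin_le_nhds
  refine Tendsto.atBot_div_const (by nlinarith) ?_
  convert (tendsto_log_nhdsGT_zero.comp hnum).atBot_add hlin using 1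
  funext x
  simp only [comp_apply]
  ring

end BoundaryODE

section ScaleFunctions

variable {σ μ q : ℝ}

theorem dlt_sq (h : 0 ≤ gma σ μ ^ 2 + 2 * q / σ ^ 2) :
    dlt σ μ q ^ 2 = gma σ μ ^ 2 + 2 * q / σ ^ 2 := by
  rw [dlt, sq_sqrt (by rw [gma] at h; linarith [sq_nonneg (μ / σ ^ 2 - 1 / 2)]), gma]
  ring

theorem gma1_mul_gma2 (hq : 0 ≤ q) : gma1 σ μ q * gma2 σ μ q = -(2 * q / σ ^ 2) := by
  rw [gma1, gma2]
  linear_combination -dlt_sq (σ := σ) (μ := μ) (by positivity)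

theorem gma1_neg (hσ : σ ≠ 0) (hq : 0 < q) : gma1 σ μ q < 0 := by
  have h2q : 0 < 2 * q / σ ^ 2 := by positivity
  have h : gma σ μ ^ 2 < dlt σ μ q ^ 2 := by rw [dlt_sq (by positivity)]; linarith
  have := abs_lt_of_sq_lt_sq h (sqrt_nonneg _)
  rw [gma1]
  linarith [le_abs_self (gma σ μ)]

theorem one_lt_gma2 (hσ : σ ≠ 0) (hqμ : μ < q) : 1 < gma2 σ μ q := by
  have hsum : gma σ μ ^ 2 + 2 * q / σ ^ 2 = (1 - gma σ μ) ^ 2 + 2 * (q - μ) / σ ^ 2 := by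
    rw [gma]; ring
  have hpos : 0 < 2 * (q - μ) / σ ^ 2 := div_pos (by linarith) (by positivity)
  have h : (1 - gma σ μ) ^ 2 < dlt σ μ q ^ 2 := by
    rw [dlt_sq (hsum ▸ by positivity), hsum]; linarith
  have := abs_lt_of_sq_lt_sq h (sqrt_nonneg _)
  rw [gma2]
  linarith [le_abs_self (1 - gma σ μ)]

theorem gma2_sub_gma1 : gma2 σ μ q - gma1 σ μ q = 2 * dlt σ μ q := by
  rw [gma1, gma2]
  ring

theorem exp_mul_sinh (u v : ℝ) : exp u * sinh v = (exp (u + v) - exp (u - v)) / 2 := by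
  rw [sinh_eq, sub_eq_add_neg u, exp_add, exp_add]
  ring

theorem exp_mul_cosh (u v : ℝ) : exp u * cosh v = (exp (u + v) + exp (u - v)) / 2 := by
  rw [cosh_eq, sub_eq_add_neg u, exp_add, exp_add]
  ring

theorem q_mul_W_of_nonneg (hq : 0 ≤ q) {x : ℝ} (hx : 0 ≤ x) :
    q * W σ μ q x = -(gma1 σ μ q * gma2 σ μ q) *
      (exp (gma2 σ μ q * x) - exp (gma1 σ μ q * x)) / (gma2 σ μ q - gma1 σ μ q) := by
  rw [W, if_pos hx, mul_assoc _ (exp _), exp_mul_sinh, gma1_mul_gma2 hq, gma1, gma2,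
    ← add_mul, ← sub_mul]
  ring

theorem Z_of_nonneg (hd : dlt σ μ q ≠ 0) {x : ℝ} (hx : 0 ≤ x) :
    Z σ μ q x = (gma2 σ μ q * exp (gma1 σ μ q * x) - gma1 σ μ q * exp (gma2 σ μ q * x)) /
      (gma2 σ μ q - gma1 σ μ q) := by
  rw [Z, if_pos hx, mul_assoc _ (exp _), exp_mul_sinh, exp_mul_cosh, gma2_sub_gma1, gma1, gma2,
    ← add_mul, ← sub_mul]
  field_simp
  ring

end ScaleFunctions

open BoundaryODE

theorem one_sub_Z_div_q_mul_W {σ μ q : ℝ} (hσ : σ ≠ 0) (hq : 0 < q) (hqμ : μ < q) {x : ℝ}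
    (hx : 0 < x) :
    1 - Z σ μ q x / (q * W σ μ q x) =
      num (gma1 σ μ q) (gma2 σ μ q) x / den (gma1 σ μ q) (gma2 σ μ q) x := by
  have ha := gma1_neg (μ := μ) hσ hq
  have hb := one_lt_gma2 hσ hqμ
  have hd : dlt σ μ q ≠ 0 := by linarith [gma2_sub_gma1 (σ := σ) (μ := μ) (q := q)]
  have hE : exp (gma2 σ μ q * x) - exp (gma1 σ μ q * x) ≠ 0 :=
    (sub_pos.2 (exp_lt_exp.2 (by nlinarith))).ne'
  have hba : gma2 σ μ q - gma1 σ μ q ≠ 0 := by linarith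
  have ha' : gma1 σ μ q ≠ 0 := ha.ne
  rw [Z_of_nonneg hd hx.le, q_mul_W_of_nonneg hq.le hx.le, num, den]
  field_simp
  ring

theorem kstar_eq_root {σ μ q : ℝ} : kstar σ μ q = root (gma1 σ μ q) (gma2 σ μ q) := rfl

theorem stmt_11 (σ μ q ε : ℝ) (hσ : 0 < σ) (hq : 0 < q) (hqμ : μ < q) :
    ∃ g : ℝ → ℝ,
      (∀ s ∈ Set.Iio ε, g s ∈ Set.Ioo 0 (kstar σ μ q)) ∧
      ContDiffOn ℝ 1 g (Set.Iio ε) ∧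
      (∀ s ∈ Set.Iio ε, HasDerivAt g (1 - Z σ μ q (g s) / (q * W σ μ q (g s))) s) ∧
      Filter.Tendsto g (nhdsWithin ε (Set.Iio ε)) (nhds 0) ∧
      Filter.Tendsto g Filter.atBot (nhds (kstar σ μ q)) := by
  have ha := gma1_neg (μ := μ) hσ.ne' hq
  have hb := one_lt_gma2 hσ.ne' hqμ
  rw [kstar_eq_root]
  set a := gma1 σ μ q
  set b := gma2 σ μ q
  have hF : ∀ x ∈ Ioo 0 (root a b),
      1 - Z σ μ q x / (q * W σ μ q x) = num a b x / den a b x :=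
    fun x hx => one_sub_Z_div_q_mul_W hσ.ne' hq hqμ hx.1
  have hΨ : ∀ x < root a b, HasDerivAt (fun y => ε + antideriv a b y) (den a b x / num a b x) x :=
    fun x hx => (hasDerivAt_antideriv ha hb ((num_pos_iff ha hb).2 hx)).const_add ε
  refine exists_hasDerivAt_of_inverse_antideriv (root_pos ha hb)
    (fun x hx => (hΨ x hx.2).continuousAt.continuousWithinAt)
    (fun x hx => by rw [hF x hx, inv_div]; exact hΨ x hx.2)
    (fun x hx => (hF x hx).symm ▸ num_div_den_neg ha hb hx)
    (((continuousOn_num_div_den ha hb).mono Ioo_subset_Ioi_self).congr hF)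
    (by simp [antideriv_zero]) (tendsto_atBot_add_const_left _ ε (tendsto_antideriv_root ha hb))
end

section
/- Suppose q > μ and fix ε ∈ ℝ. The solution of the boundary value problem in Lemma 3.1 is unique: if g₁, g₂ : (−∞, ε) → (0, k*) are differentiable, both satisfy gᵢ'(s) = 1 − Z(gᵢ(s))/(q·W(gᵢ(s))) for all s < ε, and both satisfy lim_{s↑ε} gᵢ(s) = 0 and lim_{s→−∞} gᵢ(s) = k*, then g₁(s) = g₂(s) for all s < ε. -/
open Real Filter Set MeasureTheory

open Topology

/-!
The equation `g' = 1 - Z(g)/(q W(g))` is autonomous with a `C¹` right-hand side on `(0, ∞)`, so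
solutions with values in `(0, ∞)` that agree at one time agree everywhere, and time translates of
solutions are solutions. Since `g₂` runs from `k*` at `-∞` to `0` at `ε`, it takes the value
`g₁(s₀)` at some time `s₁ < ε`, so `g₁` is the translate of `g₂` by `s₁ - s₀`. If `s₀ ≠ s₁`, one
of the two solutions would then reach the boundary value `0` at a time strictly before `ε`, where
it is still positive.
-/

section AutonomousODE

variable {E : Type*} [NormedAddCommGroup E] [NormedSpace ℝ E] {v : E → E} {U : Set E}
  {ε : ℝ} {f g : ℝ → E}

theorem ODE_autonomous_eqOn_Iio (hv : LocallyLipschitzOn U v)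
    (hf : ∀ s ∈ Iio ε, HasDerivAt f (v (f s)) s) (hfU : MapsTo f (Iio ε) U)
    (hg : ∀ s ∈ Iio ε, HasDerivAt g (v (g s)) s) (hgU : MapsTo g (Iio ε) U)
    {t₀ : ℝ} (ht₀ : t₀ < ε) (heq : f t₀ = g t₀) :
    EqOn f g (Iio ε) := by
  intro t ht
  obtain ⟨b, hb, hbε⟩ := exists_between (max_lt ht ht₀)
  set a := min t t₀ - 1
  have hab : Icc a b ⊆ Iio ε := fun x hx => hx.2.trans_lt hbε
  have hcont : ∀ h : ℝ → E, (∀ s ∈ Iio ε, HasDerivAt h (v (h s)) s) → ContinuousOn h (Icc a b) :=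
    fun h hh x hx => (hh x (hab hx)).continuousAt.continuousWithinAt
  -- Both solutions stay in a compact subset of `U` on `[a, b]`, where `v` is Lipschitz.
  set K := f '' Icc a b ∪ g '' Icc a b
  have hK : IsCompact K :=
    (isCompact_Icc.image_of_continuousOn (hcont f hf)).union
      (isCompact_Icc.image_of_continuousOn (hcont g hg))
  have hKU : K ⊆ U := union_subset ((hfU.mono_left hab).image_subset)
    ((hgU.mono_left hab).image_subset)
  obtain ⟨L, hL⟩ := (hv.mono hKU).exists_lipschitzOnWith_of_compact hK
  have hmem : ∀ x ∈ Ioo a b, x ∈ Icc a b ∧ x ∈ Iio ε :=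
    fun x hx => ⟨Ioo_subset_Icc_self hx, hab (Ioo_subset_Icc_self hx)⟩
  refine ODE_solution_unique_of_mem_Ioo (v := fun _ => v) (s := fun _ => K) (fun _ _ => hL)
    (t₀ := t₀) ⟨by linarith [min_le_right t t₀], (le_max_right _ _).trans_lt hb⟩
    (fun x hx => ⟨hf x (hmem x hx).2, .inl (mem_image_of_mem f (hmem x hx).1)⟩)
    (fun x hx => ⟨hg x (hmem x hx).2, .inr (mem_image_of_mem g (hmem x hx).1)⟩) heq
    ⟨by linarith [min_le_left t t₀], (le_max_left _ _).trans_lt hb⟩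

theorem ODE_autonomous_apply_ne_of_lt (hv : LocallyLipschitzOn U v)
    (hf : ∀ s ∈ Iio ε, HasDerivAt f (v (f s)) s) (hfU : MapsTo f (Iio ε) U)
    (hg : ∀ s ∈ Iio ε, HasDerivAt g (v (g s)) s) (hgU : MapsTo g (Iio ε) U)
    {p : E} (hgp : Tendsto g (𝓝[<] ε) (𝓝 p)) (hp : p ∉ U)
    {s₀ s₁ : ℝ} (hs : s₀ < s₁) (hs₁ : s₁ < ε) :
    f s₀ ≠ g s₁ := by
  intro heq
  set c := s₁ - s₀
  have hε' : ε - c < ε := by simp only [c]; linarith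
  have hshift : MapsTo (· + c) (Iio (ε - c)) (Iio ε) := fun s hs => by
    simp only [mem_Iio] at hs ⊢; linarith
  have hfg : EqOn f (fun s => g (s + c)) (Iio (ε - c)) :=
    ODE_autonomous_eqOn_Iio (t₀ := s₀) hv (fun s hs => hf s (hs.trans hε'))
      (hfU.mono_left (Iio_subset_Iio hε'.le))
      (fun s hs => (hg (s + c) (hshift hs)).comp_add_const s c) (hgU.comp hshift)
      (by simp only [c]; linarith) (by simp [heq, c])
  have hf_cont : Tendsto f (𝓝[<] (ε - c)) (𝓝 (f (ε - c))) :=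
    (hf _ hε').continuousAt.continuousWithinAt
  have hf_lim : Tendsto f (𝓝[<] (ε - c)) (𝓝 p) := by
    have : Tendsto (· + c) (𝓝[<] (ε - c)) (𝓝[<] ε) :=
      tendsto_nhdsWithin_of_tendsto_nhds_of_eventually_within _
        (((continuous_add_const c).tendsto' _ _ (sub_add_cancel ε c)).mono_left
          nhdsWithin_le_nhds)
        (eventually_mem_nhdsWithin.mono fun s hs => hshift hs)
    exact (hgp.comp this).congr' (eventually_mem_nhdsWithin.mono fun s hs => (hfg hs).symm)
  exact hp (tendsto_nhds_unique hf_cont hf_lim ▸ hfU hε')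

end AutonomousODE

noncomputable def odeField (σ μ q x : ℝ) : ℝ := 1 - Z σ μ q x / (q * W σ μ q x)

section ScaleFunctions

variable {σ μ q : ℝ}

theorem dlt_pos (hσ : σ ≠ 0) (hq : 0 < q) : 0 < dlt σ μ q :=
  Real.sqrt_pos.mpr (by positivity)

theorem W_pos (hσ : σ ≠ 0) (hq : 0 < q) {x : ℝ} (hx : 0 < x) : 0 < W σ μ q x := by
  have hδ := dlt_pos (μ := μ) hσ hq
  rw [W, if_pos hx.le]
  have := Real.sinh_pos_iff.mpr (mul_pos hδ hx)
  positivity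

theorem contDiffOn_W {n : WithTop ℕ∞} : ContDiffOn ℝ n (W σ μ q) (Ioi 0) := by
  refine ContDiffOn.congr ?_ fun x hx => if_pos (le_of_lt hx)
  fun_prop

theorem contDiffOn_Z {n : WithTop ℕ∞} : ContDiffOn ℝ n (Z σ μ q) (Ioi 0) := by
  refine ContDiffOn.congr ?_ fun x hx => if_pos (le_of_lt hx)
  fun_prop

theorem contDiffOn_odeField (hσ : σ ≠ 0) (hq : 0 < q) {n : WithTop ℕ∞} :
    ContDiffOn ℝ n (odeField σ μ q) (Ioi 0) :=
  contDiffOn_const.sub <| contDiffOn_Z.div (contDiffOn_const.mul contDiffOn_W)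
    fun _ hx => (mul_pos hq (W_pos hσ hq hx)).ne'

theorem locallyLipschitzOn_odeField (hσ : σ ≠ 0) (hq : 0 < q) :
    LocallyLipschitzOn (Ioi 0) (odeField σ μ q) :=
  (contDiffOn_odeField hσ hq).locallyLipschitzOn (convex_Ioi 0)

end ScaleFunctions

theorem stmt_12_general (σ μ q ε : ℝ) (hσ : 0 < σ) (hq : 0 < q)
    (g₁ g₂ : ℝ → ℝ)
    (hmem₁ : ∀ s ∈ Set.Iio ε, g₁ s ∈ Set.Ioo 0 (kstar σ μ q))
    (hmem₂ : ∀ s ∈ Set.Iio ε, g₂ s ∈ Set.Ioo 0 (kstar σ μ q))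
    (hode₁ : ∀ s ∈ Set.Iio ε,
      HasDerivAt g₁ (1 - Z σ μ q (g₁ s) / (q * W σ μ q (g₁ s))) s)
    (hode₂ : ∀ s ∈ Set.Iio ε,
      HasDerivAt g₂ (1 - Z σ μ q (g₂ s) / (q * W σ μ q (g₂ s))) s)
    (hlimε₁ : Filter.Tendsto g₁ (nhdsWithin ε (Set.Iio ε)) (nhds 0))
    (hlimε₂ : Filter.Tendsto g₂ (nhdsWithin ε (Set.Iio ε)) (nhds 0))
    (hlimk₂ : Filter.Tendsto g₂ Filter.atBot (nhds (kstar σ μ q))) :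
    Set.EqOn g₁ g₂ (Set.Iio ε) := by
  have hv := locallyLipschitzOn_odeField (μ := μ) hσ.ne' hq
  have hpos₁ : MapsTo g₁ (Iio ε) (Ioi 0) := fun s hs => (hmem₁ s hs).1
  have hpos₂ : MapsTo g₂ (Iio ε) (Ioi 0) := fun s hs => (hmem₂ s hs).1
  intro s₀ hs₀
  obtain ⟨s₁, hs₁, heq⟩ : g₁ s₀ ∈ g₂ '' Iio ε :=
    isPreconnected_Iio.intermediate_value_Ioo (l₁ := 𝓝[<] ε) inf_le_right
      (le_principal_iff.mpr (Iio_mem_atBot ε))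
      (fun s hs => (hode₂ s hs).continuousAt.continuousWithinAt) hlimε₂ hlimk₂ (hmem₁ s₀ hs₀)
  rcases lt_trichotomy s₀ s₁ with h | rfl | h
  · exact absurd heq.symm <| ODE_autonomous_apply_ne_of_lt hv hode₁ hpos₁ hode₂ hpos₂ hlimε₂
      self_notMem_Ioi h hs₁
  · exact heq.symm
  · exact absurd heq <| ODE_autonomous_apply_ne_of_lt hv hode₂ hpos₂ hode₁ hpos₁ hlimε₁
      self_notMem_Ioi h hs₀

theorem stmt_12 (σ μ q ε : ℝ) (hσ : 0 < σ) (hq : 0 < q) (hqμ : μ < q)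
    (g₁ g₂ : ℝ → ℝ)
    (hmem₁ : ∀ s ∈ Set.Iio ε, g₁ s ∈ Set.Ioo 0 (kstar σ μ q))
    (hmem₂ : ∀ s ∈ Set.Iio ε, g₂ s ∈ Set.Ioo 0 (kstar σ μ q))
    (hode₁ : ∀ s ∈ Set.Iio ε,
      HasDerivAt g₁ (1 - Z σ μ q (g₁ s) / (q * W σ μ q (g₁ s))) s)
    (hode₂ : ∀ s ∈ Set.Iio ε,
      HasDerivAt g₂ (1 - Z σ μ q (g₂ s) / (q * W σ μ q (g₂ s))) s)
    (hlimε₁ : Filter.Tendsto g₁ (nhdsWithin ε (Set.Iio ε)) (nhds 0))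
    (hlimε₂ : Filter.Tendsto g₂ (nhdsWithin ε (Set.Iio ε)) (nhds 0))
    (hlimk₁ : Filter.Tendsto g₁ Filter.atBot (nhds (kstar σ μ q)))
    (hlimk₂ : Filter.Tendsto g₂ Filter.atBot (nhds (kstar σ μ q))) :
    Set.EqOn g₁ g₂ (Set.Iio ε) :=
  stmt_12_general σ μ q ε hσ hq g₁ g₂ hmem₁ hmem₂ hode₁ hode₂ hlimε₁ hlimε₂ hlimk₂
end
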